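/- arXiv:1912.03592 — 2 statements merged into one kernel-verified Lean document; each statement's English description precedes it below -/
import Mathlib

section
/- Let W(0), W(1), W(2), … be a sequence of n×n real matrices with nonnegative entries, each row stochastic, and with every diagonal entry at least η, where 0 < η < 1. For s ≤ t define Φ(t,s) = W(t)·W(t−1)···W(s). Suppose for indices i, j there exists r with s ≤ r ≤ t such that [W(r)]_{i,j} ≥ η. Then [Φ(t,s)]_{i,j} ≥ η^{t−s+1}. -/
open Matrix Finset

/-- The backward product `Φ(t,s) = W(t) ⬝ W(t-1) ⬝ ⋯ ⬝ W(s)` (for `s ≤ t`). -/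
def Phi {N : ℕ} (W : ℕ → Matrix (Fin N) (Fin N) ℝ) (t s : ℕ) :
    Matrix (Fin N) (Fin N) ℝ :=
  ((List.range (t + 1 - s)).map fun k => W (t - k)).prod

lemma Phi_self {N : ℕ} (W : ℕ → Matrix (Fin N) (Fin N) ℝ) (t : ℕ) :
    Phi W t t = W t := by
  simp [Phi, List.range_succ]

lemma Phi_succ {N : ℕ} (W : ℕ → Matrix (Fin N) (Fin N) ℝ) {t s : ℕ} (h : s ≤ t + 1) :
    Phi W (t + 1) s = W (t + 1) * Phi W t s := by
  unfold Phi
  have h1 : t + 1 + 1 - s = (t + 1 - s) + 1 := by omega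
  rw [h1, List.range_succ_eq_map]
  simp only [List.map_cons, List.prod_cons, List.map_map]
  have : ((fun k => W (t + 1 - k)) ∘ Nat.succ) = fun k => W (t - k) := by
    funext k; simp [Nat.succ_sub_succ]
  rw [this, Nat.sub_zero]

lemma list_prod_entry_nonneg {N : ℕ} (l : List (Matrix (Fin N) (Fin N) ℝ))
    (h : ∀ M ∈ l, ∀ i j, 0 ≤ M i j) : ∀ i j, 0 ≤ l.prod i j := by
  induction l with
  | nil =>
    intro i j
    simp [Matrix.one_apply]
    split <;> norm_num
  | cons M l ih =>
    intro i j
    rw [List.prod_cons, Matrix.mul_apply]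
    apply Finset.sum_nonneg
    intro k _
    exact mul_nonneg (h M (by simp) i k) (ih (fun A hA => h A (by simp [hA])) k j)

lemma Phi_nonneg {N : ℕ} (W : ℕ → Matrix (Fin N) (Fin N) ℝ)
    (hnonneg : ∀ t i j, 0 ≤ W t i j) (t s : ℕ) : ∀ i j, 0 ≤ Phi W t s i j := by
  apply list_prod_entry_nonneg
  intro M hM i j
  simp only [List.mem_map] at hM
  obtain ⟨k, _, rfl⟩ := hM
  exact hnonneg _ i j

lemma mul_entry_lb {N : ℕ} (A B : Matrix (Fin N) (Fin N) ℝ)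
    (hA : ∀ i j, 0 ≤ A i j) (hB : ∀ i j, 0 ≤ B i j) (i k j : Fin N) :
    A i k * B k j ≤ (A * B) i j := by
  rw [Matrix.mul_apply]
  exact Finset.single_le_sum (f := fun m => A i m * B m j)
    (fun m _ => mul_nonneg (hA i m) (hB m j)) (Finset.mem_univ k)

/-- if the edge `(i,j)` has weight at least `η` at some time
`r ∈ [s, t]`, then `Φ(t,s)_{i,j} ≥ η^(t-s+1)`. -/
theorem phi_edge_lower_bound
    (n : ℕ) (hn : 2 ≤ n) (η : ℝ) (hη0 : 0 < η) (hη1 : η < 1)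
    (W : ℕ → Matrix (Fin n) (Fin n) ℝ)
    (hnonneg : ∀ t i j, 0 ≤ W t i j)
    (hrow : ∀ t i, ∑ j, W t i j = 1)
    (hdiag : ∀ t i, η ≤ W t i i) :
    ∀ s t : ℕ, s ≤ t → ∀ i j : Fin n,
      (∃ r : ℕ, s ≤ r ∧ r ≤ t ∧ η ≤ W r i j) →
      η ^ (t - s + 1) ≤ Phi W t s i j := by
  intro s
  have hPn := Phi_nonneg W hnonneg
  -- diagonal lower bound
  have hdiagP : ∀ t, s ≤ t → ∀ j : Fin n, η ^ (t - s + 1) ≤ Phi W t s j j := by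
    intro t ht
    induction t, ht using Nat.le_induction with
    | base => intro j; simpa [Phi_self] using hdiag s j
    | succ t hst ih =>
      intro j
      rw [Phi_succ W (by omega)]
      have h1 : t + 1 - s + 1 = (t - s + 1) + 1 := by omega
      rw [h1, pow_succ]
      calc η ^ (t - s + 1) * η ≤ Phi W t s j j * W (t+1) j j := by
            apply mul_le_mul (ih j) (hdiag _ j) (le_of_lt hη0) (hPn t s j j)
        _ = W (t+1) j j * Phi W t s j j := mul_comm _ _
        _ ≤ (W (t+1) * Phi W t s) j j :=
            mul_entry_lb _ _ (hnonneg _) (hPn t s) j j j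
  intro t hst i j ⟨r, hsr, hrt, hW⟩
  -- first: bound at time r
  have hbase : η ^ (r - s + 1) ≤ Phi W r s i j := by
    rcases Nat.eq_or_lt_of_le hsr with h | h
    · subst h; simpa [Phi_self] using hW
    · obtain ⟨r', rfl⟩ := Nat.exists_eq_add_of_lt h
      have hr' : s ≤ s + r' := by omega
      rw [Phi_succ W (by omega)]
      have h1 : s + r' + 1 - s + 1 = 1 + (s + r' - s + 1) := by omega
      rw [h1, pow_add, pow_one]
      calc η * η ^ (s + r' - s + 1)
          ≤ W (s + r' + 1) i j * Phi W (s + r') s j j := by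
            apply mul_le_mul hW (hdiagP _ hr' j) (by positivity) (hnonneg _ i j)
        _ ≤ (W (s + r' + 1) * Phi W (s + r') s) i j :=
            mul_entry_lb _ _ (hnonneg _) (hPn _ s) i j j
  -- now propagate from r up to t
  clear hW hst
  induction t, hrt using Nat.le_induction with
  | base => exact hbase
  | succ t hrt ih =>
    rw [Phi_succ W (by omega)]
    have h1 : t + 1 - s + 1 = 1 + (t - s + 1) := by omega
    rw [h1, pow_add, pow_one]
    calc η * η ^ (t - s + 1)
        ≤ W (t+1) i i * Phi W t s i j := by
          apply mul_le_mul (hdiag _ i) ih (by positivity) (hnonneg _ i i)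
      _ ≤ (W (t+1) * Phi W t s) i j :=
          mul_entry_lb _ _ (hnonneg _) (hPn t s) i i j
end

section
/- Let n ≥ 2 and let ζ ∈ (0,1]. Let x₀ ∈ ℝ^n be a vector whose n-th component is zero. For each k ≥ 0 let D_k be an n×n row stochastic matrix whose n-th row equals the standard basis row vector e_n^T and whose n-th column is entrywise at least ζ, i.e., [D_k]_{i,n} ≥ ζ for all i. Define x_{k+1} = D_k·x_k for all k ≥ 0. Then for every k ≥ 0 and every i ≠ n, [x_{k+1}]_i ≤ (1−ζ)^k·‖x₀‖_∞. -/
open Matrix Finset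

/-- geometric contraction of the non-last components under products
of row-stochastic matrices whose last row is `eₙᵀ` and whose last column is
entrywise at least `ζ`. The dimension is `n + 1` and the distinguished index is
`Fin.last n`; the sup norm is the norm of `Fin (n+1) → ℝ`. -/
theorem contraction_lemma
    (n : ℕ) (hn : 1 ≤ n) (ζ : ℝ) (hζ0 : 0 < ζ) (hζ1 : ζ ≤ 1)
    (D : ℕ → Matrix (Fin (n + 1)) (Fin (n + 1)) ℝ)
    (hnonneg : ∀ k i j, 0 ≤ D k i j)
    (hrow : ∀ k i, ∑ j, D k i j = 1)
    (hlastrow : ∀ k j, D k (Fin.last n) j = if j = Fin.last n then 1 else 0)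
    (hcol : ∀ k i, ζ ≤ D k i (Fin.last n))
    (x : ℕ → Fin (n + 1) → ℝ)
    (hx0 : x 0 (Fin.last n) = 0)
    (hrec : ∀ k : ℕ, x (k + 1) = (D k).mulVec (x k)) :
    ∀ k : ℕ, ∀ i : Fin (n + 1), i ≠ Fin.last n →
      x (k + 1) i ≤ (1 - ζ) ^ k * ‖x 0‖ := by
  have hζ' : (0:ℝ) ≤ 1 - ζ := by linarith
  have hnorm0 : (0:ℝ) ≤ ‖x 0‖ := norm_nonneg _
  have hlast : ∀ k, x k (Fin.last n) = 0 := by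
    intro k
    induction k with
    | zero => exact hx0
    | succ k ih =>
      rw [hrec k]
      show ∑ j, D k (Fin.last n) j * x k j = 0
      simp [hlastrow, ih]
  have key : ∀ k (B : ℝ), 0 ≤ B → (∀ j, x k j ≤ B) →
      ∀ i : Fin (n+1), i ≠ Fin.last n → x (k+1) i ≤ (1-ζ) * B := by
    intro k B hB hxB i hi
    rw [hrec k]
    show ∑ j, D k i j * x k j ≤ (1-ζ) * B
    have step : ∀ j, D k i j * x k j ≤
        D k i j * B - (if j = Fin.last n then D k i j * B else 0) := by
      intro j
      by_cases hj : j = Fin.last n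
      · simp [hj, hlast k]
      · simp only [hj, if_false, sub_zero]
        exact mul_le_mul_of_nonneg_left (hxB j) (hnonneg k i j)
    calc ∑ j, D k i j * x k j
        ≤ ∑ j, (D k i j * B - (if j = Fin.last n then D k i j * B else 0)) :=
          Finset.sum_le_sum fun j _ => step j
      _ = (∑ j, D k i j) * B - D k i (Fin.last n) * B := by
          rw [Finset.sum_sub_distrib, Finset.sum_ite_eq' Finset.univ (Fin.last n)
            (fun j => D k i j * B), Finset.sum_mul]
          simp
      _ = (1 - D k i (Fin.last n)) * B := by rw [hrow]; ring
      _ ≤ (1 - ζ) * B := by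
          apply mul_le_mul_of_nonneg_right _ hB
          linarith [hcol k i]
  intro k
  induction k with
  | zero =>
    intro i hi
    have hb : ∀ j, x 0 j ≤ ‖x 0‖ := fun j =>
      le_trans (le_abs_self _) (by simpa using norm_le_pi_norm (x 0) j)
    have := key 0 ‖x 0‖ hnorm0 hb i hi
    have h2 : (1-ζ) * ‖x 0‖ ≤ 1 * ‖x 0‖ :=
      mul_le_mul_of_nonneg_right (by linarith) hnorm0
    simpa using this.trans h2
  | succ k ih =>
    intro i hi
    have hb : ∀ j, x (k+1) j ≤ (1-ζ)^k * ‖x 0‖ := by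
      intro j
      by_cases hj : j = Fin.last n
      · rw [hj, hlast]; positivity
      · exact ih j hj
    have := key (k+1) ((1-ζ)^k * ‖x 0‖) (by positivity) hb i hi
    calc x (k+1+1) i ≤ (1-ζ) * ((1-ζ)^k * ‖x 0‖) := this
      _ = (1-ζ)^(k+1) * ‖x 0‖ := by ring
end
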